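/- arXiv:2208.00864 — 5 statements merged into one kernel-verified Lean document; each statement's English description precedes it below -/
import Mathlib

section
/- For any finite set V, any real β ≥ 0, and any function σ ↦ exp(-βH(σ)) with ferromagnetic pair interactions and nonnegative field, the first Griffiths inequality holds: for every A ⊆ V, ⟨σ_A⟩ ≥ 0, where σ_A = Π_{x∈A} σ_x and ⟨·⟩ is the Ising expectation with nonnegative coupling constants J_{x,y} ≥ 0 and magnetic field h ≥ 0. -/
open Finset
open scoped NNReal

/-!
The weight `exp(-βH)` is the exponential of a nonnegative combination of spin monomials
`σ_B = ∏_{x ∈ B} σ_x`. Since `σ_B σ_C = σ_{B ∆ C}`, such combinations form an `ℝ≥0`-algebra, so every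
term `(-βH)ⁿ / n!` of the exponential series, and hence `σ_A exp(-βH)`, is again a nonnegative
combination of monomials. Finally `Σ_σ σ_B ≥ 0` for every `B` (it is `2^|V|` or `0`).
-/

/-- The spin value attached to a Boolean: `+1` or `-1`. -/
noncomputable def spin (b : Bool) : ℝ := if b then 1 else -1

/-- Boltzmann weight `exp(-βH(σ))` for the Hamiltonian
`H(σ) = -Σ_{x,y} J_{x,y} σ_x σ_y - h Σ_x σ_x`. -/
noncomputable def isingWeight {V : Type*} [Fintype V]
    (J : V → V → ℝ) (h β : ℝ) (σ : V → Bool) : ℝ :=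
  Real.exp (β * ((∑ x, ∑ y, J x y * spin (σ x) * spin (σ y)) + h * ∑ x, spin (σ x)))

/-- The Ising expectation `⟨X⟩ = Z⁻¹ Σ_σ X(σ) e^{-βH(σ)}`. -/
noncomputable def isingExpect {V : Type*} [Fintype V] [DecidableEq V]
    (J : V → V → ℝ) (h β : ℝ) (X : (V → Bool) → ℝ) : ℝ :=
  (∑ σ : V → Bool, X σ * isingWeight J h β σ) / (∑ σ : V → Bool, isingWeight J h β σ)

lemma spin_mul_self (b : Bool) : spin b * spin b = 1 := by
  cases b <;> simp [spin]

section SpinPolynomials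

variable {V : Type*}

noncomputable def spinMonomial (B : Finset V) (σ : V → Bool) : ℝ := ∏ x ∈ B, spin (σ x)

variable (V) in
noncomputable def nonnegSpinPolynomials : Subalgebra ℝ≥0 ((V → Bool) → ℝ) :=
  Algebra.adjoin ℝ≥0 (Set.range spinMonomial)

lemma smul_mem_nonnegSpinPolynomials {c : ℝ} (hc : 0 ≤ c) {X : (V → Bool) → ℝ}
    (hX : X ∈ nonnegSpinPolynomials V) : c • X ∈ nonnegSpinPolynomials V :=
  Subalgebra.smul_mem _ hX (⟨c, hc⟩ : ℝ≥0)

variable [Fintype V]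

lemma spinMonomial_eq_prod_univ [DecidableEq V] (B : Finset V) (σ : V → Bool) :
    spinMonomial B σ = ∏ x, if x ∈ B then spin (σ x) else 1 := by
  rw [prod_ite_mem, univ_inter, spinMonomial]

lemma spinMonomial_mul [DecidableEq V] (B C : Finset V) :
    spinMonomial B * spinMonomial C = spinMonomial (symmDiff B C) := by
  ext σ
  simp only [Pi.mul_apply, spinMonomial_eq_prod_univ, ← prod_mul_distrib, mem_symmDiff]
  refine prod_congr rfl fun x _ => ?_
  by_cases hB : x ∈ B <;> by_cases hC : x ∈ C <;> simp [hB, hC, spin_mul_self]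

lemma sum_spinMonomial_nonneg [DecidableEq V] (B : Finset V) :
    0 ≤ ∑ σ : V → Bool, spinMonomial B σ := by
  simp only [spinMonomial_eq_prod_univ]
  rw [← Fintype.prod_sum (fun x (b : Bool) => if x ∈ B then spin b else 1)]
  refine prod_nonneg fun x _ => ?_
  split_ifs <;> simp [spin]

lemma mem_range_spinMonomial_of_mem_closure [DecidableEq V] {X : (V → Bool) → ℝ}
    (hX : X ∈ Submonoid.closure (Set.range spinMonomial)) : X ∈ Set.range spinMonomial := by
  induction hX using Submonoid.closure_induction with
  | mem X hX => exact hX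
  | one => exact ⟨∅, by ext; simp [spinMonomial]⟩
  | mul X Y _ _ hX hY =>
    obtain ⟨B, rfl⟩ := hX
    obtain ⟨C, rfl⟩ := hY
    exact ⟨symmDiff B C, (spinMonomial_mul B C).symm⟩

lemma sum_spinMonomial_mul_nonneg [DecidableEq V] (A : Finset V) {X : (V → Bool) → ℝ}
    (hX : X ∈ nonnegSpinPolynomials V) : 0 ≤ ∑ σ, spinMonomial A σ * X σ := by
  rw [← Subalgebra.mem_toSubmodule, nonnegSpinPolynomials, Algebra.adjoin_eq_span] at hX
  induction hX using Submodule.span_induction with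
  | mem X hX =>
    obtain ⟨B, rfl⟩ := mem_range_spinMonomial_of_mem_closure hX
    simpa only [← Pi.mul_apply, spinMonomial_mul] using sum_spinMonomial_nonneg _
  | zero => simp
  | add X Y _ _ hX hY => simpa only [Pi.add_apply, mul_add, sum_add_distrib] using add_nonneg hX hY
  | smul c X _ hX =>
    simp only [NNReal.smul_def, Pi.smul_apply, smul_eq_mul, mul_left_comm _ (c : ℝ), ← mul_sum]
    exact mul_nonneg c.coe_nonneg hX

lemma sum_spinMonomial_mul_exp_nonneg [DecidableEq V] (A : Finset V) {F : (V → Bool) → ℝ}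
    (hF : F ∈ nonnegSpinPolynomials V) : 0 ≤ ∑ σ, spinMonomial A σ * Real.exp (F σ) := by
  have hseries : HasSum (fun n : ℕ => ∑ σ, spinMonomial A σ * ((n.factorial : ℝ)⁻¹ • F ^ n) σ)
      (∑ σ, spinMonomial A σ * Real.exp (F σ)) := by
    refine hasSum_sum fun σ _ => HasSum.mul_left _ ?_
    simpa only [Pi.smul_apply, Pi.pow_apply, smul_eq_mul, ← div_eq_inv_mul, Real.exp_eq_exp_ℝ]
      using NormedSpace.expSeries_div_hasSum_exp (F σ)
  exact hseries.nonneg fun n => sum_spinMonomial_mul_nonneg A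
    (smul_mem_nonnegSpinPolynomials (by positivity) (Subalgebra.pow_mem _ hF n))

/-- `-βH`, so that `isingWeight J h β = exp ∘ isingExponent J h β`. -/
noncomputable def isingExponent (J : V → V → ℝ) (h β : ℝ) (σ : V → Bool) : ℝ :=
  β * ((∑ x, ∑ y, J x y * spin (σ x) * spin (σ y)) + h * ∑ x, spin (σ x))

lemma isingExponent_mem_nonnegSpinPolynomials {J : V → V → ℝ} {h β : ℝ}
    (hJ : ∀ x y, 0 ≤ J x y) (hh : 0 ≤ h) (hβ : 0 ≤ β) :
    isingExponent J h β ∈ nonnegSpinPolynomials V := by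
  have hmono (B : Finset V) : spinMonomial B ∈ nonnegSpinPolynomials V :=
    Algebra.subset_adjoin ⟨B, rfl⟩
  have hexp : isingExponent J h β = β • ((∑ x, ∑ y, J x y • (spinMonomial {x} * spinMonomial {y}))
      + h • ∑ x, spinMonomial {x}) := by
    ext σ
    simp [isingExponent, spinMonomial, mul_assoc]
  rw [hexp]
  refine smul_mem_nonnegSpinPolynomials hβ (add_mem ?_ (smul_mem_nonnegSpinPolynomials hh ?_))
  · exact sum_mem fun x _ => sum_mem fun y _ =>
      smul_mem_nonnegSpinPolynomials (hJ x y) (mul_mem (hmono _) (hmono _))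
  · exact sum_mem fun x _ => hmono _

end SpinPolynomials

/-- **First Griffiths inequality**: for the ferromagnetic Ising model with nonnegative
coupling constants, nonnegative magnetic field and `β ≥ 0`, for every `A ⊆ V` one has
`⟨σ_A⟩ ≥ 0`, where `σ_A = Π_{x∈A} σ_x`. -/
theorem griffiths_first_inequality {V : Type*} [Fintype V] [DecidableEq V]
    (J : V → V → ℝ) (h β : ℝ) (hJ : ∀ x y, 0 ≤ J x y) (hh : 0 ≤ h) (hβ : 0 ≤ β)
    (A : Finset V) :
    0 ≤ isingExpect J h β (fun σ => ∏ x ∈ A, spin (σ x)) :=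
  div_nonneg
    (sum_spinMonomial_mul_exp_nonneg A (isingExponent_mem_nonnegSpinPolynomials hJ hh hβ))
    (sum_nonneg fun _ _ => (Real.exp_pos _).le)
end

section
/- For the Ising model at zero field on a finite graph G = (V,E), the partition function admits the random current expansion: Z(G,β,0) = 2^{|V|} Σ_{n : ∂n = ∅} w_β(n), where the sum is over currents n : E → ℕ with empty source set, and w_β(n) = Π_{e∈E} β^{n_e}/(n_e!). -/
open Finset

/-- Interaction energy `Σ_{{x,y}∈E} σ_x σ_y` of a spin configuration. -/
noncomputable def interaction {V : Type*} [Fintype V] [DecidableEq V]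
    (G : SimpleGraph V) [DecidableRel G.Adj] (σ : V → Bool) : ℝ :=
  ∑ e ∈ G.edgeFinset,
    Sym2.lift ⟨fun x y => spin (σ x) * spin (σ y), fun _ _ => by ring⟩ e

/-- The weight `w_β(n) = Π_{e∈E} β^{n_e}/n_e!` of a current `n : E → ℕ`. -/
noncomputable def currentWeight {V : Type*} [Fintype V] [DecidableEq V]
    (G : SimpleGraph V) [DecidableRel G.Adj] (β : ℝ)
    (n : ↥G.edgeFinset → ℕ) : ℝ :=
  ∏ e : ↥G.edgeFinset, β ^ (n e) / (Nat.factorial (n e) : ℝ)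

/-- The source set `∂n` of a current: the vertices whose total incident current
`Δ_x(n) = Σ_{y : {x,y}∈E} n_{{x,y}}` is odd. -/
def sources {V : Type*} [Fintype V] [DecidableEq V]
    (G : SimpleGraph V) [DecidableRel G.Adj] (n : ↥G.edgeFinset → ℕ) : Finset V :=
  Finset.univ.filter fun x =>
    ¬ Even (∑ e : ↥G.edgeFinset, if x ∈ (e : Sym2 V) then n e else 0)

/-! Expanding each edge factor `exp (β σ_x σ_y) = ∑ₖ (β σ_x σ_y)^k / k!` and multiplying
these absolutely convergent series over the finitely many edges turns `exp (β H(σ))` into one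
series over currents `n : E → ℕ`. The spin part of the `n`-th term is `∏ₓ σ_x ^ Δ_x(n)`, and
its sum over `σ` factorizes over the vertices into `2^|V|` if every `Δ_x(n)` is even and `0`
otherwise. Swapping the finite sum over `σ` with the series gives the expansion. -/

universe u

-- Summability of the norms is carried along because the Cauchy product in the induction step
-- needs it.
theorem hasSum_pi_prod_and_summable_norm {R κ : Type*} [NormedCommRing R] [CompleteSpace R]
    {ι : Type u} [Fintype ι] {f : ι → κ → R} {S : ι → R} (hf : ∀ i, HasSum (f i) (S i))
    (hf' : ∀ i, Summable fun k => ‖f i k‖) :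
    HasSum (fun n : ι → κ => ∏ i, f i (n i)) (∏ i, S i) ∧
      Summable fun n : ι → κ => ‖∏ i, f i (n i)‖ := by
  suffices H : ∀ (ι : Type u) [Fintype ι] (f : ι → κ → R) (S : ι → R),
      (∀ i, HasSum (f i) (S i)) → (∀ i, Summable fun k => ‖f i k‖) →
      HasSum (fun n : ι → κ => ∏ i, f i (n i)) (∏ i, S i) ∧
        Summable fun n : ι → κ => ‖∏ i, f i (n i)‖ from H ι f S hf hf'
  refine Fintype.induction_empty_option ?_ ?_ ?_
  · intro α β _ e ih f S hf hf'
    let _ := Fintype.ofEquiv β e.symm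
    obtain ⟨hsum, hnorm⟩ := ih _ _ (fun i => hf (e i)) (fun i => hf' (e i))
    let E : (α → κ) ≃ (β → κ) := e.arrowCongr (Equiv.refl κ)
    have hcomp (n : α → κ) : ∏ j, f j (E n j) = ∏ i, f (e i) (n i) :=
      (e.prod_comp fun j => f j (E n j)).symm.trans (by simp [E])
    rw [e.prod_comp, ← funext hcomp] at hsum
    simp only [← hcomp] at hnorm
    exact ⟨E.hasSum_iff.mp hsum, E.summable_iff.mp hnorm⟩
  · intro f S _ _
    exact ⟨by simp, (hasSum_fintype _).summable⟩
  · intro α _ ih f S hf hf'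
    obtain ⟨hsum, hnorm⟩ := ih _ _ (fun i => hf (some i)) (fun i => hf' (some i))
    let E : (Option α → κ) ≃ κ × (α → κ) := Equiv.piOptionEquivProd
    have hsplit (n : Option α → κ) :
        ∏ i, f i (n i) = f none (E n).1 * ∏ i, f (some i) ((E n).2 i) :=
      Fintype.prod_option _
    have hsummable :
        Summable fun x : κ × (α → κ) => f none x.1 * ∏ i, f (some i) (x.2 i) :=
      summable_mul_of_summable_norm (f := f none) (g := fun n : α → κ => ∏ i, f (some i) (n i))
        (hf' none) hnorm
    have hmul := (hf none).mul hsum hsummable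
    have hmul_norm := (hf' none).mul_norm hnorm
    rw [← E.hasSum_iff] at hmul
    rw [← E.summable_iff] at hmul_norm
    simp only [hsplit, Fintype.prod_option S]
    exact ⟨hmul, hmul_norm⟩

theorem sum_bool_spin_pow (d : ℕ) : ∑ b : Bool, spin b ^ d = if Even d then 2 else 0 := by
  rcases Nat.even_or_odd d with hd | hd
  · simp [spin, hd.neg_one_pow, hd]
  · simp [spin, hd.neg_one_pow, Nat.not_even_iff_odd.mpr hd]

noncomputable def edgeSpin {V : Type*} (σ : V → Bool) : Sym2 V → ℝ :=
  Sym2.lift ⟨fun x y => spin (σ x) * spin (σ y), fun _ _ => by ring⟩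

section Currents

variable {V : Type*} [Fintype V] [DecidableEq V]

theorem edgeSpin_pow {σ : V → Bool} {s : Sym2 V} (hs : ¬s.IsDiag) (k : ℕ) :
    edgeSpin σ s ^ k = ∏ x, spin (σ x) ^ (if x ∈ s then k else 0) := by
  induction s using Sym2.ind with
  | _ a b =>
    have hab : a ≠ b := by simpa using hs
    calc edgeSpin σ s(a, b) ^ k = ∏ x ∈ {a, b}, spin (σ x) ^ k := by
          rw [prod_pair hab, ← mul_pow]; rfl
      _ = ∏ x, if x ∈ ({a, b} : Finset V) then spin (σ x) ^ k else 1 :=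
          (Fintype.prod_ite_mem _ _).symm
      _ = ∏ x, spin (σ x) ^ (if x ∈ s(a, b) then k else 0) := by
          simp only [Finset.mem_insert, Finset.mem_singleton, Sym2.mem_iff, pow_ite, pow_zero]

variable (G : SimpleGraph V) [DecidableRel G.Adj]

theorem interaction_eq_sum_edgeSpin (σ : V → Bool) :
    interaction G σ = ∑ e : G.edgeFinset, edgeSpin σ e :=
  (sum_coe_sort _ _).symm

def incidentCurrent (n : G.edgeFinset → ℕ) (x : V) : ℕ :=
  ∑ e : G.edgeFinset, if x ∈ (e : Sym2 V) then n e else 0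

theorem sources_eq_empty_iff (n : G.edgeFinset → ℕ) :
    sources G n = ∅ ↔ ∀ x, Even (incidentCurrent G n x) := by
  simp [sources, incidentCurrent, filter_eq_empty_iff]

theorem prod_edgeSpin_pow (σ : V → Bool) (n : G.edgeFinset → ℕ) :
    ∏ e : G.edgeFinset, edgeSpin σ e ^ n e = ∏ x, spin (σ x) ^ incidentCurrent G n x := by
  have hdiag (e : G.edgeFinset) : ¬(e : Sym2 V).IsDiag :=
    G.not_isDiag_of_mem_edgeSet (SimpleGraph.mem_edgeFinset.mp e.2)
  rw [prod_congr rfl fun e _ => edgeSpin_pow (hdiag e) (n e), prod_comm]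
  exact prod_congr rfl fun x _ => prod_pow_eq_pow_sum _ _ _

theorem sum_prod_spin_pow (d : V → ℕ) :
    ∑ σ : V → Bool, ∏ x, spin (σ x) ^ d x =
      if ∀ x, Even (d x) then 2 ^ Fintype.card V else 0 := by
  rw [← Fintype.prod_sum fun x b => spin b ^ d x]
  simp only [sum_bool_spin_pow, Fintype.prod_ite_zero, prod_const, card_univ]

theorem sum_spins_expansion_term (β : ℝ) (n : G.edgeFinset → ℕ) :
    ∑ σ : V → Bool, ∏ e : G.edgeFinset, (β * edgeSpin σ e) ^ n e / (n e).factorial =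
      2 ^ Fintype.card V * if sources G n = ∅ then currentWeight G β n else 0 := by
  have hfactor (σ : V → Bool) :
      ∏ e : G.edgeFinset, (β * edgeSpin σ e) ^ n e / (n e).factorial =
        currentWeight G β n * ∏ x, spin (σ x) ^ incidentCurrent G n x := by
    rw [currentWeight, ← prod_edgeSpin_pow, ← prod_mul_distrib]
    exact prod_congr rfl fun e _ => by ring
  simp only [hfactor, ← mul_sum, sum_prod_spin_pow, sources_eq_empty_iff]
  split_ifs <;> ring

theorem hasSum_exp_interaction (β : ℝ) (σ : V → Bool) :
    HasSum (fun n : G.edgeFinset → ℕ =>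
        ∏ e : G.edgeFinset, (β * edgeSpin σ e) ^ n e / (n e).factorial)
      (Real.exp (β * interaction G σ)) := by
  have hexp (x : ℝ) : HasSum (fun k => x ^ k / k.factorial) (Real.exp x) :=
    Real.exp_eq_exp_ℝ ▸ NormedSpace.expSeries_div_hasSum_exp x
  have h := (hasSum_pi_prod_and_summable_norm (fun e : G.edgeFinset => hexp _)
    fun e => NormedSpace.norm_expSeries_div_summable (β * edgeSpin σ e)).1
  rwa [← Real.exp_sum, ← mul_sum, ← interaction_eq_sum_edgeSpin] at h

end Currents

/-- **Random current expansion of the partition function**: for the Ising model at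
zero field on a finite graph `G = (V,E)`,
`Z(G,β,0) = 2^{|V|} Σ_{n : ∂n = ∅} w_β(n)`. -/
theorem partition_function_random_current {V : Type*} [Fintype V] [DecidableEq V]
    (G : SimpleGraph V) [DecidableRel G.Adj] (β : ℝ) :
    ∑ σ : V → Bool, Real.exp (β * interaction G σ) =
      2 ^ (Fintype.card V) *
        ∑' n : ↥G.edgeFinset → ℕ,
          if sources G n = ∅ then currentWeight G β n else 0 := by
  have h := hasSum_sum fun σ (_ : σ ∈ univ) => hasSum_exp_interaction G β σ
  rw [← h.tsum_eq, ← tsum_mul_left]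
  exact tsum_congr (sum_spins_expansion_term G β)
end

section
/- The switching lemma for random currents: for a finite graph G = (V,E), any function F : ℕ^E → ℝ, and any two subsets A, B ⊆ V, Σ_{∂n₁=A, ∂n₂=B} w(n₁)w(n₂)F(n₁+n₂) = Σ_{∂n₁=AΔB, ∂n₂=∅} w(n₁)w(n₂)F(n₁+n₂) 𝟙(n₁+n₂ ∈ F_B), where n ∈ F_B means there exists a current k ≤ n (pointwise) with ∂k = B, and AΔB is the symmetric difference. -/
open Finset
open scoped symmDiff

open scoped symmDiff

/-!
Fix the total current `m = n₁ + n₂`. Since `w(k) w(m - k) = w(m) ∏ₑ C(mₑ, kₑ)`, the part of either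
side with total current `m` is `w(m) F(m)` times the number of subgraphs `S` of the multigraph with
`mₑ` parallel copies of each edge `e` such that the pair of currents `(|S|, m - |S|)` satisfies the
source condition. Sources are additive mod 2: `∂(m - |S|) = ∂m ∆ ∂|S|` and `∂|S ∆ T| = ∂|S| ∆ ∂|T|`.
Hence if `B = ∂|S₀|` for some subgraph `S₀`, then `S ↦ S ∆ S₀` matches the subgraphs counted on the
left with those counted on the right; if no `k ≤ m` has `∂k = B`, both counts vanish. The same count
with `|β|` and `|F|` shows that the two series are summable together.
-/

section FiberSums

variable {α : Type*} {π : α → Type*} [∀ a, Fintype (π a)]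

lemma summable_sigma_iff_summable_sum_abs {f : (Σ a, π a) → ℝ} :
    Summable f ↔ Summable fun a => ∑ b, |f ⟨a, b⟩| := by
  rw [← summable_abs_iff, summable_sigma_of_nonneg fun _ => abs_nonneg _]
  simp only [tsum_fintype, Summable.of_finite, implies_true, true_and]

lemma tsum_sigma_eq_of_sum_fiber_eq {f g : (Σ a, π a) → ℝ}
    (hsum : ∀ a, ∑ b, f ⟨a, b⟩ = ∑ b, g ⟨a, b⟩)
    (habs : ∀ a, ∑ b, |f ⟨a, b⟩| = ∑ b, |g ⟨a, b⟩|) :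
    ∑' x, f x = ∑' x, g x := by
  have hfg : Summable f ↔ Summable g := by
    simp only [summable_sigma_iff_summable_sum_abs, habs]
  by_cases hf : Summable f
  · rw [hf.tsum_sigma, (hfg.mp hf).tsum_sigma]
    simp only [tsum_fintype, hsum]
  · rw [tsum_eq_zero_of_not_summable hf, tsum_eq_zero_of_not_summable (hfg.not.mp hf)]

end FiberSums

section Multigraph

variable {ι : Type*} [Fintype ι] [DecidableEq ι]

def prodEquivSigmaIic : (ι → ℕ) × (ι → ℕ) ≃ Σ m : ι → ℕ, ↥(Iic m) where
  toFun p := ⟨p.1 + p.2, p.1, mem_Iic.mpr le_self_add⟩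
  invFun t := (t.2, t.1 - t.2)
  left_inv p := by simp
  right_inv := by
    rintro ⟨m, k, hk⟩
    have hm : k + (m - k) = m := add_tsub_cancel_of_le (mem_Iic.mp hk)
    exact Sigma.subtype_ext hm rfl

@[simp]
lemma prodEquivSigmaIic_symm_apply (m : ι → ℕ) (k : ↥(Iic m)) :
    prodEquivSigmaIic.symm ⟨m, k⟩ = ((k : ι → ℕ), m - k) :=
  rfl

omit [Fintype ι] [DecidableEq ι] in
lemma cards_le {m : ι → ℕ} (S : ∀ i, Finset (Fin (m i))) : (fun i => #(S i)) ≤ m :=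
  fun i => by simpa using card_le_univ (S i)

lemma card_filter_cards_eq (m k : ι → ℕ) :
    #{S : ∀ i, Finset (Fin (m i)) | (fun i => #(S i)) = k} = ∏ i, (m i).choose (k i) := by
  have : ({S | (fun i => #(S i)) = k} : Finset (∀ i, Finset (Fin (m i))))
      = Fintype.piFinset fun i => powersetCard (k i) univ := by
    ext S
    simp [funext_iff, mem_powersetCard]
  simp [this, Fintype.card_piFinset, card_powersetCard]

lemma sum_Iic_prod_choose_mul (m : ι → ℕ) (P : (ι → ℕ) → ℝ) :
    ∑ k ∈ Iic m, (∏ i, ((m i).choose (k i) : ℝ)) * P k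
      = ∑ S : ∀ i, Finset (Fin (m i)), P fun i => #(S i) := by
  rw [← sum_fiberwise_of_maps_to (g := fun S i => #(S i)) (t := Iic m)
    fun S _ => mem_Iic.mpr (cards_le S)]
  refine sum_congr rfl fun k _ => ?_
  rw [sum_congr rfl fun S hS => congrArg P (mem_filter.mp hS).2, sum_const,
    card_filter_cards_eq, nsmul_eq_mul, Nat.cast_prod]

end Multigraph

lemma Finset.card_symmDiff_add_card_inter_add_card_inter {α : Type*} [DecidableEq α]
    (s t : Finset α) : #(s ∆ t) + (#(s ∩ t) + #(s ∩ t)) = #s + #t := by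
  have hs := card_sdiff_add_card_inter s t
  have ht := card_sdiff_add_card_inter t s
  rw [inter_comm] at ht
  rw [symmDiff_def, sup_eq_union, card_union_of_disjoint disjoint_sdiff_sdiff]
  omega

section Sources

variable {V : Type*} [Fintype V] [DecidableEq V] (G : SimpleGraph V) [DecidableRel G.Adj]

lemma sources_add (k₁ k₂ : ↥G.edgeFinset → ℕ) :
    sources G (k₁ + k₂) = sources G k₁ ∆ sources G k₂ := by
  ext x
  simp only [sources, mem_symmDiff, mem_filter, mem_univ, true_and, Pi.add_apply, ite_add_zero,
    sum_add_distrib, Nat.even_add]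
  tauto

lemma sources_tsub {k m : ↥G.edgeFinset → ℕ} (hk : k ≤ m) :
    sources G (m - k) = sources G m ∆ sources G k := by
  rw [← tsub_add_cancel_of_le hk, sources_add, add_tsub_cancel_right,
    symmDiff_symmDiff_cancel_right]

lemma sources_card_symmDiff {m : ↥G.edgeFinset → ℕ} (S T : ∀ e, Finset (Fin (m e))) :
    sources G (fun e => #(S e ∆ T e))
      = sources G (fun e => #(S e)) ∆ sources G (fun e => #(T e)) := by
  have hcard : ((fun e => #(S e)) + fun e => #(T e))
      = (fun e => #(S e ∆ T e)) + ((fun e => #(S e ∩ T e)) + fun e => #(S e ∩ T e)) :=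
    funext fun e => (card_symmDiff_add_card_inter_add_card_inter (S e) (T e)).symm
  rw [← sources_add, hcard, sources_add, sources_add, symmDiff_self, symmDiff_bot]

open scoped Classical in
theorem card_sources_switch (m : ↥G.edgeFinset → ℕ) (A B : Finset V) :
    #{S : ∀ e, Finset (Fin (m e)) |
        sources G (fun e => #(S e)) = A ∧ sources G (m - fun e => #(S e)) = B}
      = #{S : ∀ e, Finset (Fin (m e)) |
        sources G (fun e => #(S e)) = A ∆ B ∧ sources G (m - fun e => #(S e)) = ∅ ∧
          ∃ k ≤ m, sources G k = B} := by
  simp only [sources_tsub G (cards_le _)]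
  by_cases hB : ∃ k ≤ m, sources G k = B
  · obtain ⟨k, hk, rfl⟩ := hB
    have hS₀ : ∀ e, ∃ s : Finset (Fin (m e)), #s = k e := fun e =>
      ⟨univ.map (Fin.castLEEmb (hk e)), by simp⟩
    choose S₀ hS₀ using hS₀
    obtain rfl : (fun e => #(S₀ e)) = k := funext hS₀
    refine card_equiv ((symmDiff_left_involutive S₀).toPerm _) fun S => ?_
    simp only [mem_filter, mem_univ, true_and, Function.Involutive.coe_toPerm, Pi.symmDiff_apply,
      sources_card_symmDiff, symmDiff_left_inj, ← bot_eq_empty, symmDiff_eq_bot]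
    rw [(symmDiff_left_involutive _).eq_iff,
      symmDiff_comm (sources G _) (sources G fun e => #(S₀ e))]
    exact ⟨fun h => ⟨h.1, h.2, _, hk, rfl⟩, fun h => ⟨h.1, h.2.1⟩⟩
  · refine (card_eq_zero.mpr ?_).trans (card_eq_zero.mpr ?_).symm <;>
      refine filter_false_of_mem fun S _ h => hB ?_
    · exact ⟨_, tsub_le_self, (sources_tsub G (cards_le S)).trans h.2⟩
    · exact h.2.2

end Sources

section Currents

variable {V : Type*} [Fintype V] [DecidableEq V] (G : SimpleGraph V) [DecidableRel G.Adj]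

lemma currentWeight_mul_tsub (β : ℝ) {k m : ↥G.edgeFinset → ℕ} (hk : k ≤ m) :
    currentWeight G β k * currentWeight G β (m - k)
      = currentWeight G β m * ∏ e, ((m e).choose (k e) : ℝ) := by
  simp only [currentWeight, ← prod_mul_distrib]
  refine prod_congr rfl fun e _ => ?_
  rw [Pi.sub_apply, Nat.cast_choose ℝ (hk e)]
  have hpow : β ^ m e = β ^ k e * β ^ (m e - k e) := by rw [← pow_add, add_tsub_cancel_of_le (hk e)]
  field_simp
  rw [hpow]

lemma abs_currentWeight (β : ℝ) (n : ↥G.edgeFinset → ℕ) :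
    |currentWeight G β n| = currentWeight G |β| n := by
  simp [currentWeight, abs_prod, abs_div, abs_pow]

lemma sum_Iic_ite_currentWeight (β : ℝ) (m : ↥G.edgeFinset → ℕ)
    (P : (↥G.edgeFinset → ℕ) × (↥G.edgeFinset → ℕ) → Prop) [DecidablePred P] :
    ∑ k ∈ Iic m, (if P (k, m - k) then currentWeight G β k * currentWeight G β (m - k) else 0)
      = currentWeight G β m *
          #{S : ∀ e, Finset (Fin (m e)) | P ((fun e => #(S e)), m - fun e => #(S e))} := by
  calc _ = ∑ k ∈ Iic m, (∏ e, ((m e).choose (k e) : ℝ)) *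
        (currentWeight G β m * if P (k, m - k) then 1 else 0) := by
        refine sum_congr rfl fun k hk => ?_
        split_ifs
        · rw [currentWeight_mul_tsub G β (mem_Iic.mp hk)]
          ring
        · simp
    _ = _ := by rw [sum_Iic_prod_choose_mul, ← mul_sum, sum_boole]

lemma sum_Iic_ite_currentWeight_mul (β : ℝ) (c : (↥G.edgeFinset → ℕ) → ℝ)
    (P : (↥G.edgeFinset → ℕ) × (↥G.edgeFinset → ℕ) → Prop) [DecidablePred P]
    (m : ↥G.edgeFinset → ℕ) :
    ∑ k : ↥(Iic m), (if P (k, m - k) then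
        currentWeight G β k * currentWeight G β (m - k) * c (k + (m - k)) else 0)
      = currentWeight G β m *
          #{S : ∀ e, Finset (Fin (m e)) | P ((fun e => #(S e)), m - fun e => #(S e))} * c m := by
  calc _ = ∑ k ∈ Iic m,
        (if P (k, m - k) then currentWeight G β k * currentWeight G β (m - k) else 0) * c m := by
        rw [← sum_coe_sort (Iic m)]
        refine sum_congr rfl fun k _ => ?_
        rw [add_tsub_cancel_of_le (mem_Iic.mp k.2), ite_mul, zero_mul]
    _ = _ := by rw [← sum_mul, sum_Iic_ite_currentWeight]

theorem tsum_ite_currentWeight_congr (P Q : (↥G.edgeFinset → ℕ) × (↥G.edgeFinset → ℕ) → Prop)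
    [DecidablePred P] [DecidablePred Q]
    (hPQ : ∀ m : ↥G.edgeFinset → ℕ,
      #{S : ∀ e, Finset (Fin (m e)) | P ((fun e => #(S e)), m - fun e => #(S e))}
        = #{S : ∀ e, Finset (Fin (m e)) | Q ((fun e => #(S e)), m - fun e => #(S e))})
    (β : ℝ) (F : (↥G.edgeFinset → ℕ) → ℝ) :
    ∑' p, (if P p then currentWeight G β p.1 * currentWeight G β p.2 * F (p.1 + p.2) else 0)
      = ∑' p, (if Q p then currentWeight G β p.1 * currentWeight G β p.2 * F (p.1 + p.2)
          else 0) := by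
  rw [← prodEquivSigmaIic.symm.tsum_eq, ← prodEquivSigmaIic.symm.tsum_eq]
  refine tsum_sigma_eq_of_sum_fiber_eq (fun m => ?_) (fun m => ?_)
  · have hP := sum_Iic_ite_currentWeight_mul G β F P m
    rw [hPQ, ← sum_Iic_ite_currentWeight_mul G β F Q m] at hP
    exact hP
  · have hP := sum_Iic_ite_currentWeight_mul G |β| (|F ·|) P m
    rw [hPQ, ← sum_Iic_ite_currentWeight_mul G |β| (|F ·|) Q m] at hP
    simp only [apply_ite abs, abs_mul, abs_currentWeight, abs_zero]
    exact hP

end Currents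

open scoped Classical in
theorem switching_lemma_general {V : Type*} [Fintype V] [DecidableEq V]
    (G : SimpleGraph V) [DecidableRel G.Adj] (β : ℝ)
    (F : (↥G.edgeFinset → ℕ) → ℝ) (A B : Finset V) :
    (∑' p : (↥G.edgeFinset → ℕ) × (↥G.edgeFinset → ℕ),
        if sources G p.1 = A ∧ sources G p.2 = B then
          currentWeight G β p.1 * currentWeight G β p.2 * F (p.1 + p.2) else 0) =
      ∑' p : (↥G.edgeFinset → ℕ) × (↥G.edgeFinset → ℕ),
        if sources G p.1 = (symmDiff A B) ∧ sources G p.2 = ∅ ∧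
            (∃ k : ↥G.edgeFinset → ℕ, k ≤ p.1 + p.2 ∧ sources G k = B) then
          currentWeight G β p.1 * currentWeight G β p.2 * F (p.1 + p.2) else 0 := by
  refine tsum_ite_currentWeight_congr G _ _ (fun m => ?_) β F
  simp only [add_tsub_cancel_of_le, cards_le, card_sources_switch]

open scoped Classical in
/-- **The switching lemma** for random currents: for any `F : ℕ^E → ℝ` and any
`A, B ⊆ V`,
`Σ_{∂n₁=A, ∂n₂=B} w(n₁)w(n₂)F(n₁+n₂)
  = Σ_{∂n₁=AΔB, ∂n₂=∅} w(n₁)w(n₂)F(n₁+n₂) 𝟙(n₁+n₂ ∈ F_B)`,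
where `n ∈ F_B` means that there is a current `k ≤ n` (pointwise) with `∂k = B`. -/
theorem switching_lemma {V : Type*} [Fintype V] [DecidableEq V]
    (G : SimpleGraph V) [DecidableRel G.Adj] (β : ℝ) (hβ : 0 < β)
    (F : (↥G.edgeFinset → ℕ) → ℝ) (A B : Finset V) :
    (∑' p : (↥G.edgeFinset → ℕ) × (↥G.edgeFinset → ℕ),
        if sources G p.1 = A ∧ sources G p.2 = B then
          currentWeight G β p.1 * currentWeight G β p.2 * F (p.1 + p.2) else 0) =
      ∑' p : (↥G.edgeFinset → ℕ) × (↥G.edgeFinset → ℕ),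
        if sources G p.1 = (symmDiff A B) ∧ sources G p.2 = ∅ ∧
            (∃ k : ↥G.edgeFinset → ℕ, k ≤ p.1 + p.2 ∧ sources G k = B) then
          currentWeight G β p.1 * currentWeight G β p.2 * F (p.1 + p.2) else 0 :=
  switching_lemma_general G β F A B
end

section
/- The FKG inequality for FK percolation with cluster weight q ≥ 1: on a finite graph G = (V,E), for p ∈ [0,1] and q ≥ 1, and any two increasing functions f, g : {0,1}^E → ℝ, one has φ_{G,p,q}[fg] ≥ φ_{G,p,q}[f]·φ_{G,p,q}[g]. -/
/-!
The FK weight is log-supermodular on the lattice `{0,1}^E` when `q ≥ 1`: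
`φ(ω) φ(ω') ≤ φ(ω ⊓ ω') φ(ω ⊔ ω')`, so the FKG lattice condition holds and Mathlib's
four functions theorem applies. The edge factors `p^{|ω|} (1-p)^{|E|-|ω|}` are modular, so
this reduces to the submodularity `k(ω) + k(ω') ≤ k(ω ⊓ ω') + k(ω ⊔ ω')` of the number of
clusters. Opening an edge `uv` lowers `k` by one if `u` and `v` are not yet connected and leaves
it unchanged otherwise; since connectivity only grows with the graph, this drop is antitone,
and adding the edges of `ω` one at a time to `ω ⊓ ω'` and to `ω'` gives submodularity.
-/

open Finset

/-- The subgraph of `G` consisting of the open edges of a percolation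
configuration `ω ∈ {0,1}^E`. -/
def openGraph {V : Type*} [Fintype V] [DecidableEq V]
    (G : SimpleGraph V) [DecidableRel G.Adj] (ω : ↥G.edgeFinset → Bool) :
    SimpleGraph V where
  Adj x y := x ≠ y ∧ ∃ e : ↥G.edgeFinset, ω e = true ∧ (e : Sym2 V) = s(x, y)
  symm := by
    constructor
    rintro x y ⟨hxy, e, hω, he⟩
    exact ⟨hxy.symm, e, hω, he.trans Sym2.eq_swap⟩
  loopless := ⟨fun x h => h.1 rfl⟩

/-- The number `k(ω)` of connected components of the subgraph `(V, {e : ω_e = 1})`. -/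
noncomputable def numComponents {V : Type*} [Fintype V] [DecidableEq V]
    (G : SimpleGraph V) [DecidableRel G.Adj] (ω : ↥G.edgeFinset → Bool) : ℕ :=
  Nat.card (openGraph G ω).ConnectedComponent

/-- The number of open edges `|ω|`. -/
def numOpen {V : Type*} [Fintype V] [DecidableEq V]
    (G : SimpleGraph V) [DecidableRel G.Adj] (ω : ↥G.edgeFinset → Bool) : ℕ :=
  (Finset.univ.filter fun e => ω e = true).card

/-- The FK percolation weight `p^{|ω|} (1-p)^{|E|-|ω|} q^{k(ω)}`. -/
noncomputable def fkWeight {V : Type*} [Fintype V] [DecidableEq V]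
    (G : SimpleGraph V) [DecidableRel G.Adj] (p q : ℝ) (ω : ↥G.edgeFinset → Bool) : ℝ :=
  p ^ numOpen G ω * (1 - p) ^ (G.edgeFinset.card - numOpen G ω) * q ^ numComponents G ω

/-- The FK percolation expectation `φ_{G,p,q}[f]`. -/
noncomputable def fkExpect {V : Type*} [Fintype V] [DecidableEq V]
    (G : SimpleGraph V) [DecidableRel G.Adj] (p q : ℝ)
    (f : (↥G.edgeFinset → Bool) → ℝ) : ℝ :=
  (∑ ω : ↥G.edgeFinset → Bool, f ω * fkWeight G p q ω) /
    (∑ ω : ↥G.edgeFinset → Bool, fkWeight G p q ω)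

namespace SimpleGraph

variable {V : Type*} {H H' : SimpleGraph V} {u v x y : V}

theorem reachable_sup_edge_iff :
    (H ⊔ edge u v).Reachable x y ↔ H.Reachable x y ∨
      (H.Reachable x u ∧ H.Reachable v y) ∨ (H.Reachable x v ∧ H.Reachable u y) := by
  constructor
  · rintro ⟨p⟩
    induction p with
    | nil => exact .inl .rfl
    | @cons x z y hadj p ih =>
      rw [sup_adj, edge_adj] at hadj
      rcases hadj with hxz | ⟨⟨rfl, rfl⟩ | ⟨rfl, rfl⟩, -⟩
      · have r := hxz.reachable
        exact ih.imp r.trans (Or.imp (And.imp_left r.trans) (And.imp_left r.trans))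
      · rcases ih with h | ⟨-, h⟩ | ⟨-, h⟩
        exacts [.inr (.inl ⟨.rfl, h⟩), .inr (.inl ⟨.rfl, h⟩), .inl h]
      · rcases ih with h | ⟨-, h⟩ | ⟨-, h⟩
        exacts [.inr (.inr ⟨.rfl, h⟩), .inl h, .inr (.inr ⟨.rfl, h⟩)]
  · have hle : H ≤ H ⊔ edge u v := le_sup_left
    have huv : (H ⊔ edge u v).Reachable u v := by
      obtain rfl | hne := eq_or_ne u v
      · rfl
      · exact Adj.reachable (.inr ((edge_adj ..).2 ⟨.inl ⟨rfl, rfl⟩, hne⟩))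
    rintro (h | ⟨h₁, h₂⟩ | ⟨h₁, h₂⟩)
    · exact h.mono hle
    · exact (h₁.mono hle).trans (huv.trans (h₂.mono hle))
    · exact (h₁.mono hle).trans (huv.symm.trans (h₂.mono hle))

theorem card_connectedComponent_sup_edge_of_reachable [Finite V] (huv : H.Reachable u v) :
    Nat.card (H ⊔ edge u v).ConnectedComponent = Nat.card H.ConnectedComponent := by
  refine (Nat.card_eq_of_bijective _
    ⟨?_, ConnectedComponent.surjective_map_ofLE le_sup_left⟩).symm
  refine ConnectedComponent.ind₂ fun x y hxy => ConnectedComponent.sound ?_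
  rcases reachable_sup_edge_iff.1 (ConnectedComponent.exact hxy) with h | ⟨h₁, h₂⟩ | ⟨h₁, h₂⟩
  exacts [h, h₁.trans (huv.trans h₂), h₁.trans (huv.symm.trans h₂)]

theorem card_connectedComponent_sup_edge_add_one [Finite V] (huv : ¬H.Reachable u v) :
    Nat.card (H ⊔ edge u v).ConnectedComponent + 1 = Nat.card H.ConnectedComponent := by
  classical
  -- every component other than that of `v` survives; the one of `v` merges into that of `u`
  set c := H.connectedComponentMk v
  let φ : {d // d ≠ c} → (H ⊔ edge u v).ConnectedComponent := fun d =>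
    d.1.map (Hom.ofLE le_sup_left)
  have hφ : φ.Bijective := by
    constructor
    · rintro ⟨d₁, hd₁⟩ ⟨d₂, hd₂⟩ h
      induction d₁ using ConnectedComponent.ind with | h x =>
      induction d₂ using ConnectedComponent.ind with | h y =>
      simp only [ne_eq, c, ConnectedComponent.eq] at hd₁ hd₂
      simp only [φ, ConnectedComponent.map_mk, ConnectedComponent.eq, Hom.ofLE_apply] at h
      rcases reachable_sup_edge_iff.1 h with h | ⟨h₁, h₂⟩ | ⟨h₁, h₂⟩
      exacts [Subtype.ext (ConnectedComponent.sound h), (hd₂ h₂.symm).elim, (hd₁ h₁).elim]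
    · refine ConnectedComponent.ind fun y => ?_
      by_cases hy : H.Reachable y v
      · refine ⟨⟨H.connectedComponentMk u, fun h => huv (ConnectedComponent.exact h)⟩, ?_⟩
        exact ConnectedComponent.sound
          (reachable_sup_edge_iff.2 (.inr (.inl ⟨.rfl, hy.symm⟩)))
      · exact ⟨⟨H.connectedComponentMk y, fun h => hy (ConnectedComponent.exact h)⟩, rfl⟩
  rw [← Nat.card_eq_of_bijective φ hφ, ← Finite.card_option,
    Nat.card_congr (Equiv.optionSubtypeNe c)]

theorem card_connectedComponent_add_card_sup_edge_le [Finite V] (hle : H ≤ H') (u v : V) :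
    Nat.card H'.ConnectedComponent + Nat.card (H ⊔ edge u v).ConnectedComponent ≤
      Nat.card H.ConnectedComponent + Nat.card (H' ⊔ edge u v).ConnectedComponent := by
  by_cases h : H.Reachable u v
  · rw [card_connectedComponent_sup_edge_of_reachable h,
      card_connectedComponent_sup_edge_of_reachable (h.mono hle), add_comm]
  have := card_connectedComponent_sup_edge_add_one h
  by_cases h' : H'.Reachable u v
  · rw [card_connectedComponent_sup_edge_of_reachable h']
    omega
  · have := card_connectedComponent_sup_edge_add_one h'
    omega

theorem card_connectedComponent_add_card_sup_fromEdgeSet_le [Finite V] (hle : H ≤ H')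
    (s : Set (Sym2 V)) :
    Nat.card H'.ConnectedComponent + Nat.card (H ⊔ fromEdgeSet s).ConnectedComponent ≤
      Nat.card H.ConnectedComponent + Nat.card (H' ⊔ fromEdgeSet s).ConnectedComponent := by
  induction s, s.toFinite using Set.Finite.induction_on with
  | empty => simp [add_comm]
  | @insert e s _ _ ih =>
    induction e with | h u v =>
    have hstep := card_connectedComponent_add_card_sup_edge_le
      (sup_le_sup_right hle (fromEdgeSet s)) u v
    have hinsert (K : SimpleGraph V) :
        K ⊔ fromEdgeSet (insert s(u, v) s) = K ⊔ fromEdgeSet s ⊔ edge u v := by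
      rw [Set.insert_eq, fromEdgeSet_union, sup_comm (fromEdgeSet _), ← sup_assoc]
      rfl
    rw [hinsert, hinsert]
    omega

theorem card_connectedComponent_add_card_le_inf_add_sup [Finite V] (H₁ H₂ : SimpleGraph V) :
    Nat.card H₁.ConnectedComponent + Nat.card H₂.ConnectedComponent ≤
      Nat.card (H₁ ⊓ H₂).ConnectedComponent + Nat.card (H₁ ⊔ H₂).ConnectedComponent := by
  have := card_connectedComponent_add_card_sup_fromEdgeSet_le (inf_le_right : H₁ ⊓ H₂ ≤ H₂)
    H₁.edgeSet
  rwa [fromEdgeSet_edgeSet, sup_eq_right.2 inf_le_left, sup_comm H₂, add_comm] at this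

end SimpleGraph

section FKG

variable {α : Type*} [DistribLattice α] [OrderBot α] [Fintype α] {μ f g : α → ℝ}

theorem fkg_of_orderBot (hμ₀ : 0 ≤ μ) (hf : Monotone f) (hg : Monotone g)
    (hμ : ∀ a b, μ a * μ b ≤ μ (a ⊓ b) * μ (a ⊔ b)) :
    (∑ a, f a * μ a) * ∑ a, g a * μ a ≤ (∑ a, μ a) * ∑ a, f a * g a * μ a := by
  have key := fkg (fun a => f a - f ⊥) (fun a => g a - g ⊥) μ hμ₀
    (fun a => sub_nonneg.2 (hf bot_le)) (fun a => sub_nonneg.2 (hg bot_le))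
    (fun a b hab => sub_le_sub_right (hf hab) _) (fun a b hab => sub_le_sub_right (hg hab) _) hμ
  have shift (h : α → ℝ) : ∑ a, μ a * (h a - h ⊥) = ∑ a, h a * μ a - h ⊥ * ∑ a, μ a := by
    rw [mul_sum, ← sum_sub_distrib]
    exact sum_congr rfl fun a _ => by ring
  have hfg' : ∑ a, μ a * ((f a - f ⊥) * (g a - g ⊥)) = ∑ a, f a * g a * μ a
      - f ⊥ * ∑ a, g a * μ a - g ⊥ * ∑ a, f a * μ a + f ⊥ * g ⊥ * ∑ a, μ a := by
    simp only [mul_sum, ← sum_sub_distrib, ← sum_add_distrib]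
    exact sum_congr rfl fun a _ => by ring
  rw [shift f, shift g, hfg'] at key
  linear_combination key

theorem fkg_normalized (hμ₀ : 0 ≤ μ) (hf : Monotone f) (hg : Monotone g)
    (hμ : ∀ a b, μ a * μ b ≤ μ (a ⊓ b) * μ (a ⊔ b)) :
    (∑ a, f a * μ a) / (∑ a, μ a) * ((∑ a, g a * μ a) / ∑ a, μ a) ≤
      (∑ a, f a * g a * μ a) / ∑ a, μ a := by
  obtain hZ | hZ := (sum_nonneg fun a _ => hμ₀ a : 0 ≤ ∑ a, μ a).eq_or_lt
  · simp [← hZ]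
  rw [div_mul_div_comm, div_le_div_iff₀ (by positivity) hZ]
  nlinarith [fkg_of_orderBot hμ₀ hf hg hμ]

end FKG

section FKPercolation

variable {V : Type*} [Fintype V] [DecidableEq V] {G : SimpleGraph V} [DecidableRel G.Adj]
  {p q : ℝ}

theorem openGraph_inf (ω ω' : ↥G.edgeFinset → Bool) :
    openGraph G (ω ⊓ ω') = openGraph G ω ⊓ openGraph G ω' := by
  ext x y
  simp only [openGraph, SimpleGraph.inf_adj]
  constructor
  · rintro ⟨hxy, e, he, hexy⟩
    simp only [Pi.inf_apply, Bool.min_eq_and, Bool.and_eq_true] at he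
    exact ⟨⟨hxy, e, he.1, hexy⟩, hxy, e, he.2, hexy⟩
  · rintro ⟨⟨hxy, e, he, hexy⟩, -, e', he', hexy'⟩
    obtain rfl : e = e' := Subtype.ext (hexy.trans hexy'.symm)
    exact ⟨hxy, e, by simp [he, he'], hexy⟩

theorem openGraph_sup (ω ω' : ↥G.edgeFinset → Bool) :
    openGraph G (ω ⊔ ω') = openGraph G ω ⊔ openGraph G ω' := by
  ext x y
  simp only [openGraph, SimpleGraph.sup_adj, Pi.sup_apply, Bool.max_eq_or, Bool.or_eq_true,
    or_and_right, exists_or, and_or_left]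

theorem numComponents_add_le (ω ω' : ↥G.edgeFinset → Bool) :
    numComponents G ω + numComponents G ω' ≤
      numComponents G (ω ⊓ ω') + numComponents G (ω ⊔ ω') := by
  simpa only [numComponents, openGraph_inf, openGraph_sup] using
    SimpleGraph.card_connectedComponent_add_card_le_inf_add_sup (openGraph G ω) (openGraph G ω')

theorem numOpen_le (ω : ↥G.edgeFinset → Bool) : numOpen G ω ≤ #G.edgeFinset :=
  (card_filter_le _ _).trans_eq (card_univ.trans (Fintype.card_coe _))

theorem numOpen_inf_add_numOpen_sup (ω ω' : ↥G.edgeFinset → Bool) :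
    numOpen G (ω ⊓ ω') + numOpen G (ω ⊔ ω') = numOpen G ω + numOpen G ω' := by
  simp only [numOpen, Pi.inf_apply, Pi.sup_apply, Bool.min_eq_and, Bool.max_eq_or,
    Bool.and_eq_true, Bool.or_eq_true, filter_and, filter_or]
  exact add_comm _ _ |>.trans (card_union_add_card_inter _ _)

theorem fkWeight_nonneg (hp₀ : 0 ≤ p) (hp₁ : p ≤ 1) (hq : 0 ≤ q) (ω : ↥G.edgeFinset → Bool) :
    0 ≤ fkWeight G p q ω := by
  have : 0 ≤ 1 - p := sub_nonneg.2 hp₁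
  unfold fkWeight
  positivity

theorem fkWeight_mul_le (hp₀ : 0 ≤ p) (hp₁ : p ≤ 1) (hq : 1 ≤ q) (ω ω' : ↥G.edgeFinset → Bool) :
    fkWeight G p q ω * fkWeight G p q ω' ≤ fkWeight G p q (ω ⊓ ω') * fkWeight G p q (ω ⊔ ω') := by
  have hopen := numOpen_inf_add_numOpen_sup ω ω'
  have hclosed : (#G.edgeFinset - numOpen G (ω ⊓ ω')) + (#G.edgeFinset - numOpen G (ω ⊔ ω')) =
      (#G.edgeFinset - numOpen G ω) + (#G.edgeFinset - numOpen G ω') := by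
    have := numOpen_le (ω ⊓ ω'); have := numOpen_le (ω ⊔ ω')
    have := numOpen_le ω; have := numOpen_le ω'
    omega
  calc fkWeight G p q ω * fkWeight G p q ω'
      = p ^ (numOpen G ω + numOpen G ω') *
          (1 - p) ^ ((#G.edgeFinset - numOpen G ω) + (#G.edgeFinset - numOpen G ω')) *
          q ^ (numComponents G ω + numComponents G ω') := by
        simp only [fkWeight, pow_add]; ring
    _ ≤ p ^ (numOpen G (ω ⊓ ω') + numOpen G (ω ⊔ ω')) *
          (1 - p) ^ ((#G.edgeFinset - numOpen G (ω ⊓ ω')) +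
            (#G.edgeFinset - numOpen G (ω ⊔ ω'))) *
          q ^ (numComponents G (ω ⊓ ω') + numComponents G (ω ⊔ ω')) := by
        rw [hopen, hclosed]
        have : 0 ≤ 1 - p := sub_nonneg.2 hp₁
        exact mul_le_mul_of_nonneg_left (pow_le_pow_right₀ hq (numComponents_add_le ω ω'))
          (by positivity)
    _ = fkWeight G p q (ω ⊓ ω') * fkWeight G p q (ω ⊔ ω') := by
        simp only [fkWeight, pow_add]; ring

end FKPercolation

/-- **FKG inequality for FK percolation with cluster weight `q ≥ 1`**: for
`p ∈ [0,1]`, `q ≥ 1`, and increasing functions `f, g : {0,1}^E → ℝ`,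
`φ_{G,p,q}[fg] ≥ φ_{G,p,q}[f]·φ_{G,p,q}[g]`. -/
theorem fk_fkg_inequality {V : Type*} [Fintype V] [DecidableEq V]
    (G : SimpleGraph V) [DecidableRel G.Adj] (p q : ℝ)
    (hp0 : 0 ≤ p) (hp1 : p ≤ 1) (hq : 1 ≤ q)
    (f g : (↥G.edgeFinset → Bool) → ℝ) (hf : Monotone f) (hg : Monotone g) :
    fkExpect G p q (fun ω => f ω * g ω) ≥ fkExpect G p q f * fkExpect G p q g :=
  fkg_normalized (fun ω => fkWeight_nonneg hp0 hp1 (zero_le_one.trans hq) ω) hf hg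
    (fkWeight_mul_le hp0 hp1 hq)
end

section
/- The Edwards-Sokal coupling: let G = (V,E) be a finite graph, β > 0, p = 1 - e^{-2β}. Sample ω from the FK percolation measure φ_{G,p,2}, then assign to each connected component of ω an independent uniform spin in {-1,+1}, and let σ_x be the spin of the component of x. Then σ is distributed according to the Ising measure μ_{G,β,0}. -/
open Finset

/-! The joint Edwards–Sokal weight
`W(ω, σ) = ∏_e ((1 - p) 𝟙[ω_e = 0] + p 𝟙[ω_e = 1, σ is constant on e])` has both marginals in
closed form. Summing over `σ` counts the colorings constant on the open clusters, `2 ^ k(ω)`,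
and returns the FK weight, so the coupling outputs `σ` with probability `Σ_ω W(ω, σ) / Z_FK`.
Summing over `ω` instead factorises over edges into
`∏_e (if σ agrees on e then 1 else 1 - p)`, and `1 - p = e^{-2β}` makes this
`e^{-β|E|} e^{β H(σ)}`. -/

lemma spin_mul_spin (a b : Bool) : spin a * spin b = if a = b then 1 else -1 := by
  cases a <;> cases b <;> norm_num [spin]

section EdwardsSokal

open scoped Classical

variable {V α : Type*}

def IsMonochromatic (σ : V → α) (e : Sym2 V) : Prop :=
  ∀ x ∈ e, ∀ y ∈ e, σ x = σ y

lemma isMonochromatic_mk {σ : V → α} {x y : V} : IsMonochromatic σ s(x, y) ↔ σ x = σ y := by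
  simp only [IsMonochromatic, Sym2.mem_iff, forall_eq_or_imp, forall_eq, true_and, and_true]
  exact ⟨And.left, fun h => ⟨h, h.symm⟩⟩

lemma lift_spin_mul_spin (σ : V → Bool) (e : Sym2 V) :
    Sym2.lift ⟨fun x y => spin (σ x) * spin (σ y), fun _ _ => by ring⟩ e =
      if IsMonochromatic σ e then 1 else -1 := by
  induction e using Sym2.ind with
  | _ x y => exact (spin_mul_spin _ _).trans (if_congr isMonochromatic_mk.symm rfl rfl)

lemma forall_reachable_imp_eq_iff (H : SimpleGraph V) (σ : V → α) :
    (∀ x y, H.Reachable x y → σ x = σ y) ↔ ∀ x y, H.Adj x y → σ x = σ y := by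
  refine ⟨fun h x y hxy => h x y hxy.reachable, fun h x y hxy => ?_⟩
  rw [SimpleGraph.reachable_iff_reflTransGen] at hxy
  induction hxy with
  | refl => rfl
  | tail _ hbc ih => exact ih.trans (h _ _ hbc)

def constOnReachableEquiv (H : SimpleGraph V) (α : Type*) :
    {σ : V → α // ∀ x y, H.Reachable x y → σ x = σ y} ≃ (H.ConnectedComponent → α) where
  toFun σ := SimpleGraph.ConnectedComponent.lift σ.1 fun x y w _ => σ.2 x y w.reachable
  invFun f := ⟨fun v => f (H.connectedComponentMk v),
    fun _ _ hxy => congrArg f (SimpleGraph.ConnectedComponent.eq.mpr hxy)⟩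
  left_inv _ := rfl
  right_inv _ := funext fun c => c.ind fun _ => rfl

variable [Fintype V] [DecidableEq V]

lemma card_filter_forall_reachable_imp_eq [Fintype α] [DecidableEq α] (H : SimpleGraph V) :
    #{σ : V → α | ∀ x y, H.Reachable x y → σ x = σ y} =
      Fintype.card α ^ Nat.card H.ConnectedComponent := by
  rw [← Fintype.card_subtype, ← Nat.card_eq_fintype_card,
    Nat.card_congr (constOnReachableEquiv H α), Nat.card_fun, Nat.card_eq_fintype_card]

lemma prod_ite_bool_eq_pow_mul_pow {ι M : Type*} [Fintype ι] [CommMonoid M] (ω : ι → Bool)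
    (a b : M) :
    ∏ i, (if ω i = true then a else b) =
      a ^ #{i | ω i = true} * b ^ (Fintype.card ι - #{i | ω i = true}) := by
  rw [prod_ite, prod_const, prod_const, ← card_univ,
    ← card_filter_add_card_filter_not (s := univ) fun i => ω i = true, Nat.add_sub_cancel_left]

variable (G : SimpleGraph V) [DecidableRel G.Adj]

lemma forall_openGraph_adj_imp_eq_iff (ω : ↥G.edgeFinset → Bool) (σ : V → α) :
    (∀ x y, (openGraph G ω).Adj x y → σ x = σ y) ↔
      ∀ e : ↥G.edgeFinset, ω e = true → IsMonochromatic σ e := by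
  refine ⟨fun h ⟨e, he⟩ hω => ?_, fun h x y ⟨_, e, hω, he⟩ => isMonochromatic_mk.1 (he ▸ h e hω)⟩
  induction e using Sym2.ind with
  | _ x y =>
    have hxy : G.Adj x y := SimpleGraph.mem_edgeFinset.1 he
    exact isMonochromatic_mk.2 (h x y ⟨hxy.ne, ⟨_, he⟩, hω, rfl⟩)

lemma fkWeight_eq_prod_mul (p q : ℝ) (ω : ↥G.edgeFinset → Bool) :
    fkWeight G p q ω = (∏ e, if ω e = true then p else 1 - p) * q ^ numComponents G ω := by
  rw [prod_ite_bool_eq_pow_mul_pow, Fintype.card_coe]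
  rfl

lemma fkWeight_mul_inv_pow_numComponents {q : ℝ} (hq : q ≠ 0) (p : ℝ) (ω : ↥G.edgeFinset → Bool) :
    fkWeight G p q ω * q⁻¹ ^ numComponents G ω = ∏ e, if ω e = true then p else 1 - p := by
  rw [fkWeight_eq_prod_mul, mul_assoc, ← mul_pow, mul_inv_cancel₀ hq, one_pow, mul_one]

noncomputable def edwardsSokalWeight (p : ℝ) (ω : ↥G.edgeFinset → Bool) (σ : V → α) : ℝ :=
  ∏ e, if ω e = true then (if IsMonochromatic σ e then p else 0) else 1 - p

lemma edwardsSokalWeight_eq_prod_mul_ite [DecidableEq α] (p : ℝ) (ω : ↥G.edgeFinset → Bool)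
    (σ : V → α) :
    edwardsSokalWeight G p ω σ = (∏ e, if ω e = true then p else 1 - p) *
      if ∀ x y : V, (openGraph G ω).Reachable x y → σ x = σ y then 1 else 0 := by
  simp only [forall_reachable_imp_eq_iff, forall_openGraph_adj_imp_eq_iff]
  split_ifs with h
  · rw [mul_one]
    refine prod_congr rfl fun e _ => ?_
    by_cases hω : ω e = true <;> simp [hω, h e]
  · push Not at h
    obtain ⟨e, hω, hmono⟩ := h
    rw [mul_zero]
    exact prod_eq_zero (mem_univ e) (by simp [hω, hmono])

lemma sum_colorings_edwardsSokalWeight [Fintype α] [DecidableEq α] (p : ℝ)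
    (ω : ↥G.edgeFinset → Bool) :
    ∑ σ : V → α, edwardsSokalWeight G p ω σ = fkWeight G p (Fintype.card α) ω := by
  simp_rw [edwardsSokalWeight_eq_prod_mul_ite, ← mul_sum, sum_boole,
    card_filter_forall_reachable_imp_eq, fkWeight_eq_prod_mul]
  push_cast
  rfl

lemma sum_configs_edwardsSokalWeight (p : ℝ) (σ : V → α) :
    ∑ ω, edwardsSokalWeight G p ω σ =
      ∏ e : ↥G.edgeFinset, if IsMonochromatic σ e then 1 else 1 - p := by
  refine (Fintype.prod_sum fun (e : ↥G.edgeFinset) (b : Bool) =>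
    if b = true then (if IsMonochromatic σ (e : Sym2 V) then p else 0) else 1 - p).symm.trans
      (Fintype.prod_congr _ _ fun e => ?_)
  by_cases h : IsMonochromatic σ e <;> simp [h]

lemma exp_mul_interaction (β : ℝ) (σ : V → Bool) :
    Real.exp (β * interaction G σ) = Real.exp β ^ #G.edgeFinset *
      ∏ e : ↥G.edgeFinset, if IsMonochromatic σ e then 1 else Real.exp (-2 * β) := by
  have hedge : ∀ e : Sym2 V, Real.exp (β * if IsMonochromatic σ e then 1 else -1) =
      Real.exp β * if IsMonochromatic σ e then 1 else Real.exp (-2 * β) := fun e => by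
    split_ifs
    · rw [mul_one, mul_one]
    · rw [← Real.exp_add]; ring_nf
  rw [interaction, mul_sum, Real.exp_sum, ← prod_coe_sort, ← Fintype.card_coe,
    ← card_univ, ← prod_const, ← prod_mul_distrib]
  simp_rw [lift_spin_mul_spin, hedge]

end EdwardsSokal

open scoped Classical in
theorem edwards_sokal_coupling_general {V : Type*} [Fintype V] [DecidableEq V]
    (G : SimpleGraph V) [DecidableRel G.Adj] (β : ℝ)
    (p : ℝ) (hp : p = 1 - Real.exp (-2 * β)) (σ : V → Bool) :
    (∑ ω : ↥G.edgeFinset → Bool,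
        fkWeight G p 2 ω * ((2 : ℝ)⁻¹ ^ numComponents G ω) *
          (if ∀ x y : V, (openGraph G ω).Reachable x y → σ x = σ y then 1 else 0)) /
      (∑ ω : ↥G.edgeFinset → Bool, fkWeight G p 2 ω) =
    Real.exp (β * interaction G σ) /
      (∑ σ' : V → Bool, Real.exp (β * interaction G σ')) := by
  have hising : ∀ σ' : V → Bool,
      Real.exp (β * interaction G σ') =
        Real.exp β ^ #G.edgeFinset * ∑ ω, edwardsSokalWeight G p ω σ' :=
    fun σ' => by rw [exp_mul_interaction, sum_configs_edwardsSokalWeight, hp, sub_sub_cancel]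
  have hnum : ∑ ω : ↥G.edgeFinset → Bool, fkWeight G p 2 ω * (2 : ℝ)⁻¹ ^ numComponents G ω *
        (if ∀ x y : V, (openGraph G ω).Reachable x y → σ x = σ y then 1 else 0) =
      ∑ ω, edwardsSokalWeight G p ω σ := by
    simp_rw [edwardsSokalWeight_eq_prod_mul_ite, fkWeight_mul_inv_pow_numComponents G two_ne_zero]
  have hden : ∑ ω : ↥G.edgeFinset → Bool, fkWeight G p 2 ω =
      ∑ σ' : V → Bool, ∑ ω, edwardsSokalWeight G p ω σ' := by
    rw [sum_comm]
    simp_rw [sum_colorings_edwardsSokalWeight, Fintype.card_bool, Nat.cast_ofNat]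
  rw [hnum, hden]
  simp_rw [hising, ← mul_sum]
  exact (mul_div_mul_left _ _ (pow_ne_zero _ (Real.exp_ne_zero β))).symm

open scoped Classical in
/-- **Edwards–Sokal coupling**: sample `ω` from FK percolation with `q = 2` and
`p = 1 - e^{-2β}`, then colour each connected component of `ω` with an independent
uniform spin. For every spin configuration `σ`, the probability of obtaining `σ`
(namely `Σ_ω φ(ω) 2^{-k(ω)} 𝟙(σ is constant on the components of ω)`) equals the
Ising probability `μ_{G,β,0}(σ)`. -/
theorem edwards_sokal_coupling {V : Type*} [Fintype V] [DecidableEq V]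
    (G : SimpleGraph V) [DecidableRel G.Adj] (β : ℝ) (hβ : 0 < β)
    (p : ℝ) (hp : p = 1 - Real.exp (-2 * β)) (σ : V → Bool) :
    (∑ ω : ↥G.edgeFinset → Bool,
        fkWeight G p 2 ω * ((2 : ℝ)⁻¹ ^ numComponents G ω) *
          (if ∀ x y : V, (openGraph G ω).Reachable x y → σ x = σ y then 1 else 0)) /
      (∑ ω : ↥G.edgeFinset → Bool, fkWeight G p 2 ω) =
    Real.exp (β * interaction G σ) /
      (∑ σ' : V → Bool, Real.exp (β * interaction G σ')) :=
  edwards_sokal_coupling_general G β p hp σ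
end
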